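/- Let a ∈ UT_n be invertible and ω = −t the minus-flip along the antidiagonal. The following are equivalent: (1) the inner automorphism φ_a : x ↦ a x a⁻¹ commutes with ω; (2) there exists a nonzero scalar k ∈ K such that a ω(a) = ω(a) a = −k · I. -/

import Mathlib

/-!
Since `t` reverses products, `a ω(x) a⁻¹ = ω(a x a⁻¹)` reads `a t(x) a⁻¹ = t(a)⁻¹ t(x) t(a)`,
i.e. `t(a) a` commutes with `t(x)`. As `t` permutes `UT_n`, condition (1) says that `t(a) a`
commutes with all of `UT_n`; testing against the matrix units `e_ij` with `i ≤ j` shows that this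
happens exactly when `t(a) a = k·I`, with `k ≠ 0` because `t(a) a` is invertible.
Then `t(a) = k a⁻¹`, so also `a t(a) = k·I`, which is (2) since `ω(a) = -t(a)`.
-/

open Matrix

/-- The flip along the antidiagonal. -/
def tFlip {n : ℕ} {K : Type*} [Field K] (x : Matrix (Fin n) (Fin n) K) :
    Matrix (Fin n) (Fin n) K :=
  Matrix.of fun i j => x j.rev i.rev

/-- The minus-flip `ω = −t`. -/
def omg {n : ℕ} {K : Type*} [Field K] (x : Matrix (Fin n) (Fin n) K) :
    Matrix (Fin n) (Fin n) K :=
  -tFlip x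

theorem mul_mul_eq_mul_mul_iff_commute {M : Type*} [Monoid M] {a b c d x : M}
    (hab : a * b = 1) (hba : b * a = 1) (hcd : c * d = 1) (hdc : d * c = 1) :
    a * x * b = d * x * c ↔ Commute (c * a) x := by
  constructor
  · intro h
    calc c * a * x = c * (a * x * b) * a := by simp only [mul_assoc, hba, mul_one]
      _ = c * (d * x * c) * a := by rw [h]
      _ = x * (c * a) := by simp only [← mul_assoc, hcd, one_mul]
  · intro h
    calc a * x * b = d * (c * a * x) * b := by simp only [← mul_assoc, hdc, one_mul]
      _ = d * (x * (c * a)) * b := by rw [h.eq]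
      _ = d * x * c := by simp only [mul_assoc, hab, mul_one]

namespace Matrix

variable {m α : Type*} [Fintype m]

theorem mem_range_scalar_iff_commute_isUpperTriangular [LinearOrder m] [CommSemiring α]
    {M : Matrix m m α} :
    M ∈ Set.range (scalar m) ↔ ∀ N : Matrix m m α, N.IsUpperTriangular → Commute M N := by
  refine ⟨fun ⟨r, hr⟩ N _ => hr ▸ scalar_commute r (Commute.all r) N, fun hM => ?_⟩
  have hsingle (i j : m) (hij : i ≤ j) : Commute (single i j 1) M :=
    (hM _ (blockTriangular_single hij 1)).symm
  obtain _ | ⟨⟨i₀⟩⟩ := isEmpty_or_nonempty m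
  · exact ⟨0, Subsingleton.elim _ _⟩
  refine ⟨M i₀ i₀, ext fun i j => ?_⟩
  obtain rfl | hij := eq_or_ne i j
  · rw [scalar_apply, diagonal_apply_eq]
    rcases le_total i₀ i with h | h
    · exact diag_eq_of_commute_single (hsingle i₀ i h)
    · exact (diag_eq_of_commute_single (hsingle i i₀ h)).symm
  · rw [scalar_apply, diagonal_apply_ne _ hij,
      row_eq_zero_of_commute_single (hsingle i i le_rfl) hij.symm]

theorem mem_range_scalar_iff_of_isUnit [DecidableEq m] [Semiring α] [Nontrivial α]
    {M : Matrix m m α} (hM : IsUnit M) :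
    M ∈ Set.range (scalar m) ↔ ∃ k : α, k ≠ 0 ∧ M = k • 1 := by
  refine ⟨fun ⟨c, hc⟩ => ?_, fun ⟨k, _, hk⟩ => ⟨k, by rw [hk, smul_one_eq_diagonal]; rfl⟩⟩
  by_cases hc0 : c = 0
  -- `scalar m 0` is a unit only when the matrix ring is trivial, i.e. `m` is empty.
  · rw [← hc, hc0, map_zero, isUnit_zero_iff] at hM
    exact ⟨1, one_ne_zero, eq_of_zero_eq_one hM _ _⟩
  · exact ⟨c, hc0, by rw [← hc, smul_one_eq_diagonal]; rfl⟩

end Matrix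

section Flip

variable {n : ℕ} {K : Type*} [Field K]

@[simp]
lemma tFlip_apply (x : Matrix (Fin n) (Fin n) K) (i j : Fin n) : tFlip x i j = x j.rev i.rev :=
  rfl

lemma tFlip_tFlip (x : Matrix (Fin n) (Fin n) K) : tFlip (tFlip x) = x := by
  ext i j
  simp

lemma tFlip_one : tFlip (1 : Matrix (Fin n) (Fin n) K) = 1 := by
  ext i j
  simp [one_apply, Fin.rev_inj, eq_comm]

lemma tFlip_mul (x y : Matrix (Fin n) (Fin n) K) : tFlip (x * y) = tFlip y * tFlip x := by
  ext i j
  simp only [tFlip_apply, mul_apply]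
  exact Fintype.sum_equiv Fin.revPerm _ _ fun k => by simp [mul_comm]

lemma tFlip_mul_eq_one {x y : Matrix (Fin n) (Fin n) K} (h : x * y = 1) :
    tFlip y * tFlip x = 1 := by
  rw [← tFlip_mul, h, tFlip_one]

lemma isUpperTriangular_tFlip {x : Matrix (Fin n) (Fin n) K} (hx : x.IsUpperTriangular) :
    (tFlip x).IsUpperTriangular :=
  fun _ _ hij => hx (Fin.rev_lt_rev.mpr hij)

lemma forall_isUpperTriangular_tFlip_iff {P : Matrix (Fin n) (Fin n) K → Prop} :
    (∀ x : Matrix (Fin n) (Fin n) K, x.IsUpperTriangular → P (tFlip x)) ↔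
      ∀ y : Matrix (Fin n) (Fin n) K, y.IsUpperTriangular → P y :=
  ⟨fun h y hy => tFlip_tFlip y ▸ h _ (isUpperTriangular_tFlip hy),
    fun h _ hx => h _ (isUpperTriangular_tFlip hx)⟩

lemma mul_omg_mul_eq_omg_iff {a b : Matrix (Fin n) (Fin n) K} (hab : a * b = 1)
    (hba : b * a = 1) (x : Matrix (Fin n) (Fin n) K) :
    a * omg x * b = omg (a * x * b) ↔ Commute (tFlip a * a) (tFlip x) := by
  rw [omg, omg, mul_neg, neg_mul, neg_inj, tFlip_mul, tFlip_mul, ← mul_assoc]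
  exact mul_mul_eq_mul_mul_iff_commute hab hba (tFlip_mul_eq_one hba) (tFlip_mul_eq_one hab)

lemma mul_omg_and_omg_mul_eq_neg_smul_one_iff {a b : Matrix (Fin n) (Fin n) K}
    (hab : a * b = 1) (k : K) :
    (a * omg a = -(k • 1) ∧ omg a * a = -(k • 1)) ↔ tFlip a * a = k • 1 := by
  rw [omg, mul_neg, neg_mul, neg_inj, neg_inj]
  refine ⟨And.right, fun h => ⟨?_, h⟩⟩
  have hflip : tFlip a = k • b :=
    calc tFlip a = tFlip a * a * b := by rw [mul_assoc, hab, mul_one]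
      _ = k • b := by rw [h, smul_one_mul]
  rw [hflip, mul_smul_comm, hab]

end Flip

theorem phi_commutes_omega_iff_omega_invertible_general {n : ℕ} {K : Type*} [Field K]
    (a b : Matrix (Fin n) (Fin n) K)
    (hab : a * b = 1) (hba : b * a = 1) :
    (∀ x : Matrix (Fin n) (Fin n) K, (∀ i j : Fin n, j < i → x i j = 0) →
        a * omg x * b = omg (a * x * b)) ↔
      ∃ k : K, k ≠ 0 ∧
        a * omg a = -(k • (1 : Matrix (Fin n) (Fin n) K)) ∧
        omg a * a = -(k • (1 : Matrix (Fin n) (Fin n) K)) := by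
  have hunit : IsUnit (tFlip a * a) :=
    IsUnit.mul ⟨⟨_, _, tFlip_mul_eq_one hba, tFlip_mul_eq_one hab⟩, rfl⟩ ⟨⟨a, b, hab, hba⟩, rfl⟩
  simp_rw [mul_omg_and_omg_mul_eq_neg_smul_one_iff hab, ← mem_range_scalar_iff_of_isUnit hunit,
    mem_range_scalar_iff_commute_isUpperTriangular]
  rw [← forall_isUpperTriangular_tFlip_iff]
  simp_rw [← mul_omg_mul_eq_omg_iff hab hba]
  -- `x.IsUpperTriangular` unfolds to the entrywise hypothesis of (1).
  exact Iff.rfl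

/-- for an invertible upper triangular `a`, the inner automorphism
`φ_a : x ↦ a x a⁻¹` commutes with `ω` on the upper triangular matrices if and only if
`a ω(a) = ω(a) a = −k·I` for some nonzero scalar `k` (i.e. `a` is `ω`-invertible). -/
theorem phi_commutes_omega_iff_omega_invertible {n : ℕ} {K : Type*} [Field K]
    (a b : Matrix (Fin n) (Fin n) K)
    (hUTa : ∀ i j : Fin n, j < i → a i j = 0)
    (hab : a * b = 1) (hba : b * a = 1) :
    (∀ x : Matrix (Fin n) (Fin n) K, (∀ i j : Fin n, j < i → x i j = 0) →
        a * omg x * b = omg (a * x * b)) ↔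
      ∃ k : K, k ≠ 0 ∧
        a * omg a = -(k • (1 : Matrix (Fin n) (Fin n) K)) ∧
        omg a * a = -(k • (1 : Matrix (Fin n) (Fin n) K)) :=
  phi_commutes_omega_iff_omega_invertible_general a b hab hba
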